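/- arXiv:1702.06573 — 3 statements merged into one kernel-verified Lean document; each statement's English description precedes it below -/
import Mathlib

section
/- Let p > 1. There exist positive constants c_p and C_p, depending only on p, such that for all a, b ∈ ℝ one has c_p K(a,b;p) ≤ F(a,b;p) ≤ C_p K(a,b;p). -/
open Real

/-- `F(a,b;p) = |b|^p − |a|^p − p a|a|^{p−2}(b−a)` (with `a|a|^{p-2} = 0` when `a = 0`,
which is automatic here since `0 ^ x = 0` for `x ≠ 0` and the factor `a = 0`). -/
noncomputable def F (p a b : ℝ) : ℝ :=
  |b| ^ p - |a| ^ p - p * a * |a| ^ (p - 2) * (b - a)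

/-- `K(a,b;p) = (b−a)² max(|a|,|b|)^{p−2}` (with the convention `K = 0` when `a = b = 0`,
which is automatic since then the factor `(b-a)² = 0`). -/
noncomputable def K (p a b : ℝ) : ℝ :=
  (b - a) ^ 2 * (max |a| |b|) ^ (p - 2)

/-!
Write `ψ(t) = |t|^{p-2} t`, so that `p ψ` is the derivative of the convex function `|t|^p` and
`F(a,b)` is the gap between `|t|^p` and its tangent line at `a`; in particular `F ≥ 0`. Two
algebraic identities then sandwich `F`: `F(a,b) + F(b,a) = p (ψ b - ψ a)(b - a)` bounds it from
above, and splitting `F(a,b)` at the midpoint `m` gives `F(a,b) ≥ p (ψ m - ψ a)(m - a)`. So it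
suffices that `(ψ b - ψ a)(b - a)` is comparable to `K(a,b)`. By symmetry `|a| ≤ b`; for
`a ≥ 0` this is Bernoulli's inequality for `(a/b)^{p-1}`, and for `a < 0` both factors are
comparable to `b^{p-1}` and `b`. Passing to the midpoint loses only a constant, because
`max(|a|,|m|)` lies between `max(|a|,|b|)/3` and `max(|a|,|b|)`.
-/

open Set

lemma convexOn_univ_abs_rpow {p : ℝ} (hp : 1 ≤ p) :
    ConvexOn ℝ univ (fun t : ℝ => |t| ^ p) := by
  have himage : (abs '' univ : Set ℝ) = Ici 0 := by
    ext x
    simp only [image_univ, mem_range, mem_Ici]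
    exact ⟨by rintro ⟨y, rfl⟩; exact abs_nonneg y, fun hx => ⟨x, abs_of_nonneg hx⟩⟩
  have habs : ConvexOn ℝ univ (abs : ℝ → ℝ) := convexOn_univ_norm
  exact (himage ▸ convexOn_rpow hp).comp habs
    (himage ▸ fun x hx y _ hxy => rpow_le_rpow hx hxy (by linarith))

lemma ConvexOn.add_mul_sub_le_of_hasDerivAt {f : ℝ → ℝ} {s : Set ℝ} {f' x y : ℝ}
    (hf : ConvexOn ℝ s f) (hx : x ∈ s) (hy : y ∈ s) (hfx : HasDerivAt f f' x) :
    f x + f' * (y - x) ≤ f y := by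
  rcases lt_trichotomy x y with hxy | rfl | hxy
  · have := hf.le_slope_of_hasDerivAt hx hy hxy hfx
    rw [slope_def_field, le_div_iff₀ (sub_pos.2 hxy)] at this
    linarith
  · simp
  · have := hf.slope_le_of_hasDerivAt hy hx hxy hfx
    rw [slope_def_field, div_le_iff₀ (sub_pos.2 hxy)] at this
    linarith

noncomputable def dualityMap (p t : ℝ) : ℝ :=
  |t| ^ (p - 2) * t

lemma dualityMap_neg (p t : ℝ) : dualityMap p (-t) = -dualityMap p t := by
  simp [dualityMap]

lemma dualityMap_of_nonneg {p t : ℝ} (hp : 1 < p) (ht : 0 ≤ t) :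
    dualityMap p t = t ^ (p - 1) := by
  rw [dualityMap, abs_of_nonneg ht, ← rpow_add_one' ht (by linarith)]
  ring_nf

lemma F_eq_sub_tangent (p a b : ℝ) :
    F p a b = |b| ^ p - (|a| ^ p + p * dualityMap p a * (b - a)) := by
  rw [F, dualityMap]; ring

lemma F_nonneg {p : ℝ} (hp : 1 < p) (a b : ℝ) : 0 ≤ F p a b := by
  have htangent := (convexOn_univ_abs_rpow hp.le).add_mul_sub_le_of_hasDerivAt
    (mem_univ a) (mem_univ b) (hasDerivAt_abs_rpow a hp)
  rw [F_eq_sub_tangent, sub_nonneg, dualityMap]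
  linarith

lemma F_le_mul_dualityMap_sub_mul_sub {p : ℝ} (hp : 1 < p) (a b : ℝ) :
    F p a b ≤ p * ((dualityMap p b - dualityMap p a) * (b - a)) := by
  have hsum : F p a b + F p b a = p * ((dualityMap p b - dualityMap p a) * (b - a)) := by
    rw [F_eq_sub_tangent, F_eq_sub_tangent]; ring
  linarith [F_nonneg hp b a]

lemma mul_dualityMap_sub_mul_sub_midpoint_le_F {p : ℝ} (hp : 1 < p) (a b : ℝ) :
    p * ((dualityMap p ((a + b) / 2) - dualityMap p a) * ((a + b) / 2 - a)) ≤ F p a b := by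
  set m := (a + b) / 2
  have hsplit : F p a b = F p a m + F p m b
      + p * ((dualityMap p m - dualityMap p a) * (m - a)) := by
    simp only [F_eq_sub_tangent, m]; ring
  linarith [F_nonneg hp a m, F_nonneg hp m b]

lemma K_comm (p a b : ℝ) : K p b a = K p a b := by
  rw [K, K, max_comm]; ring

lemma K_neg (p a b : ℝ) : K p (-a) (-b) = K p a b := by
  simp only [K, abs_neg]; ring

lemma one_sub_rpow_bounds {q t : ℝ} (hq : 0 < q) (ht₀ : 0 ≤ t) (ht₁ : t ≤ 1) :
    min 1 q * (1 - t) ≤ 1 - t ^ q ∧ 1 - t ^ q ≤ max 1 q * (1 - t) := by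
  rcases le_total 1 q with hq1 | hq1
  · have hbernoulli := one_add_mul_self_le_rpow_one_add (s := t - 1) (by linarith) hq1
    have hle : t ^ q ≤ t := by
      simpa using rpow_le_rpow_of_exponent_ge' ht₀ ht₁ zero_le_one hq1
    rw [add_sub_cancel] at hbernoulli
    rw [min_eq_left hq1, max_eq_right hq1]
    constructor <;> nlinarith
  · have hbernoulli := rpow_one_add_le_one_add_mul_self (s := t - 1) (by linarith) hq.le hq1
    have hge : t ≤ t ^ q := by simpa using rpow_le_rpow_of_exponent_ge' ht₀ ht₁ hq.le hq1
    rw [add_sub_cancel] at hbernoulli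
    rw [min_eq_right hq1, max_eq_left hq1]
    constructor <;> nlinarith

lemma rpow_sub_rpow_bounds {q a b : ℝ} (hq : 0 < q) (ha : 0 ≤ a) (hab : a ≤ b) :
    min 1 q * b ^ (q - 1) * (b - a) ≤ b ^ q - a ^ q ∧
      b ^ q - a ^ q ≤ max 1 q * b ^ (q - 1) * (b - a) := by
  rcases (ha.trans hab).eq_or_lt with rfl | hb
  · obtain rfl : a = 0 := le_antisymm hab ha
    simp
  set t := a / b
  have ha_eq : a = t * b := (div_mul_cancel₀ a hb.ne').symm
  have hpow : a ^ q = t ^ q * b ^ q := by rw [ha_eq, mul_rpow (by positivity) hb.le]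
  have hb_pow : b ^ q = b ^ (q - 1) * b := by rw [← rpow_add_one' hb.le (by linarith)]; ring_nf
  obtain ⟨hlow, hupp⟩ := one_sub_rpow_bounds hq (t := t) (by positivity)
    ((div_le_one hb).2 hab)
  rw [hpow, ha_eq]
  constructor
  · calc min 1 q * b ^ (q - 1) * (b - t * b) = b ^ q * (min 1 q * (1 - t)) := by
          rw [hb_pow]; ring
      _ ≤ b ^ q * (1 - t ^ q) := by gcongr
      _ = b ^ q - t ^ q * b ^ q := by ring
  · calc b ^ q - t ^ q * b ^ q = b ^ q * (1 - t ^ q) := by ring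
      _ ≤ b ^ q * (max 1 q * (1 - t)) := by gcongr
      _ = max 1 q * b ^ (q - 1) * (b - t * b) := by rw [hb_pow]; ring

lemma dualityMap_sub_mul_sub_bounds_of_nonneg {p a b : ℝ} (hp : 1 < p) (ha : 0 ≤ a)
    (hab : a ≤ b) :
    min 1 (p - 1) / 2 * K p a b ≤ (dualityMap p b - dualityMap p a) * (b - a) ∧
      (dualityMap p b - dualityMap p a) * (b - a) ≤ 2 * max 1 (p - 1) * K p a b := by
  have hb : 0 ≤ b := ha.trans hab
  obtain ⟨hlow, hupp⟩ := rpow_sub_rpow_bounds (q := p - 1) (by linarith) ha hab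
  rw [show p - 1 - 1 = p - 2 by ring] at hlow hupp
  rw [dualityMap_of_nonneg hp ha, dualityMap_of_nonneg hp hb, K, abs_of_nonneg ha,
    abs_of_nonneg hb, max_eq_right hab]
  have hba : 0 ≤ b - a := sub_nonneg.2 hab
  have hT : 0 ≤ (b - a) ^ 2 * b ^ (p - 2) := by positivity
  constructor
  · calc min 1 (p - 1) / 2 * ((b - a) ^ 2 * b ^ (p - 2))
        ≤ min 1 (p - 1) * ((b - a) ^ 2 * b ^ (p - 2)) := by
          nlinarith [lt_min one_pos (sub_pos.2 hp)]
      _ = min 1 (p - 1) * b ^ (p - 2) * (b - a) * (b - a) := by ring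
      _ ≤ (b ^ (p - 1) - a ^ (p - 1)) * (b - a) := by gcongr
  · calc (b ^ (p - 1) - a ^ (p - 1)) * (b - a)
        ≤ max 1 (p - 1) * b ^ (p - 2) * (b - a) * (b - a) := by gcongr
      _ = max 1 (p - 1) * ((b - a) ^ 2 * b ^ (p - 2)) := by ring
      _ ≤ 2 * max 1 (p - 1) * ((b - a) ^ 2 * b ^ (p - 2)) := by
          nlinarith [le_max_left 1 (p - 1)]

lemma dualityMap_sub_mul_sub_bounds_of_nonpos {p a b : ℝ} (hp : 1 < p) (ha : a ≤ 0)
    (hab : -a ≤ b) :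
    min 1 (p - 1) / 2 * K p a b ≤ (dualityMap p b - dualityMap p a) * (b - a) ∧
      (dualityMap p b - dualityMap p a) * (b - a) ≤ 2 * max 1 (p - 1) * K p a b := by
  have hx : 0 ≤ -a := neg_nonneg.2 ha
  have hb : 0 ≤ b := hx.trans hab
  have hψa : dualityMap p a = -(-a) ^ (p - 1) := by
    rw [← neg_neg (dualityMap p a), ← dualityMap_neg, dualityMap_of_nonneg hp hx]
  have hψb : dualityMap p b = b ^ (p - 2) * b := by rw [dualityMap, abs_of_nonneg hb]
  have hxpow : (-a) ^ (p - 1) ≤ b ^ (p - 2) * b := by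
    rw [← hψb, dualityMap_of_nonneg hp hb]
    exact rpow_le_rpow hx hab (by linarith)
  have hxpow₀ : 0 ≤ (-a) ^ (p - 1) := by positivity
  have hB : 0 ≤ b ^ (p - 2) := by positivity
  have hba : 0 ≤ b - a := by linarith
  have hT : 0 ≤ (b - a) ^ 2 * b ^ (p - 2) := by positivity
  rw [hψa, hψb, K, abs_of_nonpos ha, abs_of_nonneg hb, max_eq_right hab]
  constructor
  · nlinarith [mul_nonneg (mul_nonneg hba (by linarith : 0 ≤ b + a)) hB, mul_nonneg hxpow₀ hba,
      mul_le_mul_of_nonneg_right (min_le_left 1 (p - 1)) hT]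
  · nlinarith [mul_nonneg (sub_nonneg.2 hxpow) hba, mul_nonneg (mul_nonneg hB hx) hba,
      mul_le_mul_of_nonneg_right (le_max_left 1 (p - 1)) hT]

lemma dualityMap_sub_mul_sub_bounds {p : ℝ} (hp : 1 < p) (a b : ℝ) :
    min 1 (p - 1) / 2 * K p a b ≤ (dualityMap p b - dualityMap p a) * (b - a) ∧
      (dualityMap p b - dualityMap p a) * (b - a) ≤ 2 * max 1 (p - 1) * K p a b := by
  wlog hab : |a| ≤ |b| generalizing a b
  · have := this b a (le_of_not_ge hab)
    rwa [K_comm, show (dualityMap p a - dualityMap p b) * (a - b)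
      = (dualityMap p b - dualityMap p a) * (b - a) by ring] at this
  wlog hb : 0 ≤ b generalizing a b
  · have := this (-a) (-b) (by simpa using hab) (by linarith)
    rwa [K_neg, dualityMap_neg, dualityMap_neg,
      show (-dualityMap p b - -dualityMap p a) * (-b - -a)
        = (dualityMap p b - dualityMap p a) * (b - a) by ring] at this
  rw [abs_of_nonneg hb] at hab
  rcases le_total 0 a with ha | ha
  · exact dualityMap_sub_mul_sub_bounds_of_nonneg hp ha ((le_abs_self a).trans hab)
  · exact dualityMap_sub_mul_sub_bounds_of_nonpos hp ha ((neg_le_abs a).trans hab)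

lemma rpow_le_rpow_abs_mul_rpow_of_le_mul {x y c : ℝ} (r : ℝ) (hy : 0 < y) (hyx : y ≤ x)
    (hxy : x ≤ c * y) :
    x ^ r ≤ c ^ |r| * y ^ r := by
  have hc : 1 ≤ c := le_of_mul_le_mul_right (by linarith) hy
  rcases le_total 0 r with hr | hr
  · rw [abs_of_nonneg hr, ← mul_rpow (by linarith) hy.le]
    exact rpow_le_rpow (by linarith) hxy hr
  · calc x ^ r ≤ y ^ r := rpow_le_rpow_of_nonpos hy hyx hr
      _ ≤ c ^ |r| * y ^ r := le_mul_of_one_le_left (by positivity) (one_le_rpow hc (abs_nonneg r))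

lemma K_le_mul_K_midpoint (p a b : ℝ) :
    K p a b ≤ 4 * 3 ^ |p - 2| * K p a ((a + b) / 2) := by
  rcases eq_or_ne a b with rfl | hab
  · simp [K]
  have hN : 0 < max |a| |(a + b) / 2| := by
    rcases eq_or_ne a 0 with rfl | ha
    · exact lt_max_of_lt_right (abs_pos.2 (by simpa using hab.symm))
    · exact lt_max_of_lt_left (abs_pos.2 ha)
  have hNM : max |a| |(a + b) / 2| ≤ max |a| |b| := by
    refine max_le (le_max_left _ _) ?_
    rw [abs_div, abs_two]
    linarith [abs_add_le a b, le_max_left |a| |b|, le_max_right |a| |b|]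
  have hMN : max |a| |b| ≤ 3 * max |a| |(a + b) / 2| := by
    have hb : |b| ≤ 2 * |(a + b) / 2| + |a| := by
      calc |b| = |2 * ((a + b) / 2) + -a| := by ring_nf
        _ ≤ |2 * ((a + b) / 2)| + |-a| := abs_add_le _ _
        _ = 2 * |(a + b) / 2| + |a| := by rw [abs_mul, abs_two, abs_neg]
    refine max_le ?_ ?_ <;>
      linarith [le_max_left |a| |(a + b) / 2|, le_max_right |a| |(a + b) / 2|, abs_nonneg a]
  rw [K, K]
  calc (b - a) ^ 2 * max |a| |b| ^ (p - 2)
      ≤ (b - a) ^ 2 * (3 ^ |p - 2| * max |a| |(a + b) / 2| ^ (p - 2)) := by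
        gcongr
        exact rpow_le_rpow_abs_mul_rpow_of_le_mul (p - 2) hN hNM hMN
    _ = 4 * 3 ^ |p - 2| * (((a + b) / 2 - a) ^ 2 * max |a| |(a + b) / 2| ^ (p - 2)) := by ring

/-- For `p > 1` there exist positive constants `c_p, C_p`, depending only
on `p`, such that `c_p K(a,b;p) ≤ F(a,b;p) ≤ C_p K(a,b;p)` for all real `a, b`. -/
theorem F_comparable_K (p : ℝ) (hp : 1 < p) :
    ∃ c C : ℝ, 0 < c ∧ 0 < C ∧
      ∀ a b : ℝ, c * K p a b ≤ F p a b ∧ F p a b ≤ C * K p a b := by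
  have hp₀ : 0 < p := by linarith
  refine ⟨p * (min 1 (p - 1) / 2) / (4 * 3 ^ |p - 2|), p * (2 * max 1 (p - 1)),
    by positivity, by positivity, fun a b => ⟨?_, ?_⟩⟩
  · have hK : K p a b / (4 * 3 ^ |p - 2|) ≤ K p a ((a + b) / 2) := by
      rw [div_le_iff₀ (by positivity), mul_comm]
      exact K_le_mul_K_midpoint p a b
    calc p * (min 1 (p - 1) / 2) / (4 * 3 ^ |p - 2|) * K p a b
        = p * (min 1 (p - 1) / 2 * (K p a b / (4 * 3 ^ |p - 2|))) := by ring
      _ ≤ p * (min 1 (p - 1) / 2 * K p a ((a + b) / 2)) := by gcongr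
      _ ≤ p * ((dualityMap p ((a + b) / 2) - dualityMap p a) * ((a + b) / 2 - a)) :=
          mul_le_mul_of_nonneg_left (dualityMap_sub_mul_sub_bounds hp a _).1 hp₀.le
      _ ≤ F p a b := mul_dualityMap_sub_mul_sub_midpoint_le_F hp a b
  · calc F p a b ≤ p * ((dualityMap p b - dualityMap p a) * (b - a)) :=
          F_le_mul_dualityMap_sub_mul_sub hp a b
      _ ≤ p * (2 * max 1 (p - 1) * K p a b) :=
          mul_le_mul_of_nonneg_left (dualityMap_sub_mul_sub_bounds hp a b).2 hp₀.le
      _ = p * (2 * max 1 (p - 1)) * K p a b := by ring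
end

section
/- Let 1 < p < 2. Then for every ε > 0 and all a, b ∈ ℝ one has 0 ≤ F_ε(a,b;p) ≤ (1/(p−1)) F(a,b;p). -/
open Real

/-- `F_ε(a,b;p) = (b²+ε²)^{p/2} − (a²+ε²)^{p/2} − p a (a²+ε²)^{(p−2)/2}(b−a)`. -/
noncomputable def Feps (p ε a b : ℝ) : ℝ :=
  (b ^ 2 + ε ^ 2) ^ (p / 2) - (a ^ 2 + ε ^ 2) ^ (p / 2)
    - p * a * (a ^ 2 + ε ^ 2) ^ ((p - 2) / 2) * (b - a)

/-!
With `φ(x) = (x² + ε²)^{p/2}` and `ψ(x) = |x|^p`, both `F_ε(a,b;p)` and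
`F(a,b;p)/(p-1) - F_ε(a,b;p)` have the form `G b - G a - G'(a) (b - a)`, for `G = φ` and
`G = ψ/(p-1) - φ`; such a remainder is nonnegative as soon as `G'` is monotone. For `G = φ` this is
`φ'' = p((p-1)x² + ε²)(x² + ε²)^{(p-4)/2} ≥ 0`. For the other one, away from `0` we have
`φ'' ≤ p(x² + ε²)^{(p-2)/2} ≤ p|x|^{p-2} = ψ''/(p-1)` since `p ≤ 2`, and `G'` is continuous at `0`
because `ψ` is `C¹` for `p > 1`.
-/

open Set

theorem add_mul_sub_le_of_monotone_deriv {f f' : ℝ → ℝ} (hf : ∀ x, HasDerivAt f (f' x) x)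
    (hf' : Monotone f') (a b : ℝ) : f a + f' a * (b - a) ≤ f b := by
  have hconv : ConvexOn ℝ univ f :=
    Monotone.convexOn_univ_of_deriv (fun x ↦ (hf x).differentiableAt)
      (by rwa [show deriv f = f' from funext fun x ↦ (hf x).deriv])
  rcases lt_trichotomy a b with hab | rfl | hab
  · have := hconv.le_slope_of_hasDerivAt trivial trivial hab (hf a)
    rw [slope_def_field, le_div_iff₀ (sub_pos.2 hab)] at this
    linarith
  · simp
  · have := hconv.slope_le_of_hasDerivAt trivial trivial hab (hf a)
    rw [slope_def_field, div_le_iff₀ (sub_pos.2 hab)] at this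
    linarith

theorem monotone_of_hasDerivAt_nonneg_of_ne {f f' : ℝ → ℝ} {c : ℝ} (hf : Continuous f)
    (hf' : ∀ x ≠ c, HasDerivAt f (f' x) x) (hf'₀ : ∀ x ≠ c, 0 ≤ f' x) : Monotone f := by
  have key : ∀ D : Set ℝ, Convex ℝ D → interior D ⊆ {c}ᶜ → MonotoneOn f D := fun D hD hint ↦
    monotoneOn_of_deriv_nonneg hD hf.continuousOn
      (fun x hx ↦ (hf' x (hint hx)).differentiableAt.differentiableWithinAt)
      (fun x hx ↦ (hf' x (hint hx)).deriv ▸ hf'₀ x (hint hx))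
  exact (key _ (convex_Iic c) (by simp)).Iic_union_Ici (key _ (convex_Ici c) (by simp))

theorem sq_rpow_div_two (x r : ℝ) : (x ^ 2) ^ (r / 2) = |x| ^ r := by
  rw [rpow_div_two_eq_sqrt r (sq_nonneg x), sqrt_sq_eq_abs]

theorem mul_rpow_sub_four_div_two {y : ℝ} (hy : y ≠ 0) (p : ℝ) :
    y * y ^ ((p - 4) / 2) = y ^ ((p - 2) / 2) := by
  rw [show (p - 2) / 2 = (p - 4) / 2 + 1 by ring, rpow_add_one hy, mul_comm]

section SmoothedPower

variable {ε x : ℝ}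

theorem hasDerivAt_sq_add_sq_rpow (p : ℝ) (h : x ^ 2 + ε ^ 2 ≠ 0) :
    HasDerivAt (fun x ↦ (x ^ 2 + ε ^ 2) ^ (p / 2)) (p * x * (x ^ 2 + ε ^ 2) ^ ((p - 2) / 2)) x :=
  (((hasDerivAt_pow 2 x).add_const (ε ^ 2)).rpow_const (Or.inl h)).congr_deriv <| by
    rw [show p / 2 - 1 = (p - 2) / 2 by ring]
    push_cast
    ring

theorem hasDerivAt_mul_sq_add_sq_rpow (p : ℝ) (h : x ^ 2 + ε ^ 2 ≠ 0) :
    HasDerivAt (fun x ↦ p * x * (x ^ 2 + ε ^ 2) ^ ((p - 2) / 2))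
      (p * ((p - 1) * x ^ 2 + ε ^ 2) * (x ^ 2 + ε ^ 2) ^ ((p - 4) / 2)) x :=
  (((hasDerivAt_id x).const_mul p).mul
    (((hasDerivAt_pow 2 x).add_const (ε ^ 2)).rpow_const (Or.inl h))).congr_deriv <| by
    rw [show (p - 2) / 2 - 1 = (p - 4) / 2 by ring, ← mul_rpow_sub_four_div_two h, id]
    push_cast
    ring

theorem monotone_mul_sq_add_sq_rpow {p : ℝ} (hp : 1 ≤ p) (hε : ε ≠ 0) :
    Monotone (fun x ↦ p * x * (x ^ 2 + ε ^ 2) ^ ((p - 2) / 2)) := by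
  have hpos : ∀ x : ℝ, 0 < x ^ 2 + ε ^ 2 := fun x ↦ by positivity
  refine monotone_of_deriv_nonneg
    (fun x ↦ (hasDerivAt_mul_sq_add_sq_rpow p (hpos x).ne').differentiableAt) fun x ↦ ?_
  rw [(hasDerivAt_mul_sq_add_sq_rpow p (hpos x).ne').deriv]
  have hfactor : 0 ≤ (p - 1) * x ^ 2 + ε ^ 2 := by nlinarith [sq_nonneg x, sq_nonneg ε]
  have hrpow := rpow_pos_of_pos (hpos x) ((p - 4) / 2)
  positivity

theorem hasDerivAt_mul_abs_rpow (p : ℝ) (hx : x ≠ 0) :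
    HasDerivAt (fun x ↦ p * |x| ^ (p - 2) * x) (p * (p - 1) * |x| ^ (p - 2)) x := by
  have h := hasDerivAt_mul_sq_add_sq_rpow (ε := 0) p (by positivity : x ^ 2 + 0 ^ 2 ≠ 0)
  simp only [zero_pow two_ne_zero, add_zero] at h
  convert h using 1
  · funext y
    rw [sq_rpow_div_two]
    ring
  · rw [← sq_rpow_div_two, ← mul_rpow_sub_four_div_two (y := x ^ 2) (by positivity)]
    ring

theorem mul_sq_add_sq_rpow_le_abs_rpow {p : ℝ} (hp : p ≤ 2) (hx : x ≠ 0) :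
    ((p - 1) * x ^ 2 + ε ^ 2) * (x ^ 2 + ε ^ 2) ^ ((p - 4) / 2) ≤ |x| ^ (p - 2) := by
  have hpos : 0 < x ^ 2 := by positivity
  calc ((p - 1) * x ^ 2 + ε ^ 2) * (x ^ 2 + ε ^ 2) ^ ((p - 4) / 2)
      ≤ (x ^ 2 + ε ^ 2) * (x ^ 2 + ε ^ 2) ^ ((p - 4) / 2) :=
        mul_le_mul_of_nonneg_right (by nlinarith) (by positivity)
    _ = (x ^ 2 + ε ^ 2) ^ ((p - 2) / 2) := mul_rpow_sub_four_div_two (by positivity) p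
    _ ≤ (x ^ 2) ^ ((p - 2) / 2) :=
        rpow_le_rpow_of_nonpos hpos (by linarith [sq_nonneg ε]) (by linarith)
    _ = |x| ^ (p - 2) := sq_rpow_div_two x (p - 2)

theorem continuous_mul_abs_rpow {p : ℝ} (hp : 1 < p) :
    Continuous (fun x ↦ p * |x| ^ (p - 2) * x) := by
  have h := (contDiff_norm_rpow (E := ℝ) hp).continuous_deriv le_rfl
  rwa [show deriv (fun x : ℝ ↦ ‖x‖ ^ p) = fun x ↦ p * |x| ^ (p - 2) * x from
    funext fun x ↦ by simpa using (hasDerivAt_abs_rpow x hp).deriv] at h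

theorem monotone_abs_rpow_deriv_sub {p : ℝ} (hp1 : 1 < p) (hp2 : p ≤ 2) (hε : ε ≠ 0) :
    Monotone (fun x ↦
      1 / (p - 1) * (p * |x| ^ (p - 2) * x) - p * x * (x ^ 2 + ε ^ 2) ^ ((p - 2) / 2)) := by
  have hpos : ∀ x : ℝ, 0 < x ^ 2 + ε ^ 2 := fun x ↦ by positivity
  refine monotone_of_hasDerivAt_nonneg_of_ne (c := 0)
    ((continuous_const.mul (continuous_mul_abs_rpow hp1)).sub
      (continuous_iff_continuousAt.2 fun x ↦
        (hasDerivAt_mul_sq_add_sq_rpow p (hpos x).ne').continuousAt))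
    (fun x hx ↦ ((hasDerivAt_mul_abs_rpow p hx).const_mul _).sub
      (hasDerivAt_mul_sq_add_sq_rpow p (hpos x).ne')) fun x hx ↦ ?_
  have hcancel : 1 / (p - 1) * (p * (p - 1) * |x| ^ (p - 2)) = p * |x| ^ (p - 2) := by
    field_simp [show p - 1 ≠ 0 by linarith]
  rw [hcancel, sub_nonneg, mul_assoc]
  exact mul_le_mul_of_nonneg_left (mul_sq_add_sq_rpow_le_abs_rpow hp2 hx) (by linarith)

end SmoothedPower

/-- For `1 < p < 2`, every `ε > 0` and all `a, b ∈ ℝ`,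
`0 ≤ F_ε(a,b;p) ≤ (1/(p−1)) F(a,b;p)`. -/
theorem Feps_nonneg_le_F (p : ℝ) (hp1 : 1 < p) (hp2 : p < 2) (ε : ℝ) (hε : 0 < ε)
    (a b : ℝ) :
    0 ≤ Feps p ε a b ∧ Feps p ε a b ≤ (1 / (p - 1)) * F p a b := by
  have hpos : ∀ x : ℝ, x ^ 2 + ε ^ 2 ≠ 0 := fun x ↦ by positivity
  constructor
  · have := add_mul_sub_le_of_monotone_deriv (fun x ↦ hasDerivAt_sq_add_sq_rpow p (hpos x))
      (monotone_mul_sq_add_sq_rpow hp1.le hε.ne') a b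
    unfold Feps
    linarith
  · have := add_mul_sub_le_of_monotone_deriv
      (fun x ↦ ((hasDerivAt_abs_rpow x hp1).const_mul (1 / (p - 1))).sub
        (hasDerivAt_sq_add_sq_rpow p (hpos x)))
      (monotone_abs_rpow_deriv_sub hp1 hp2.le hε.ne') a b
    simp only [Pi.sub_apply] at this
    unfold Feps F
    linear_combination this
end

section
/- Let ν be a Lévy measure on ℝ^d whose characteristic exponent ψ satisfies the Hartman–Wintner condition, and let (P_t) be the associated convolution semigroup. Then for every t > 0 the constant C_t := (2π)^{−d} ∫_{ℝ^d} e^{−t Re ψ(ξ)} dξ is finite, and for every 1 ≤ p < ∞ and every f ∈ L^p(ℝ^d), ‖P_t f‖_∞ ≤ C_t^{1/p} ‖f‖_p. -/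
open MeasureTheory Filter RealInnerProductSpace FourierTransform Module
open scoped ENNReal ContDiff

/-!
By the Hartman–Wintner condition, `e^{-t Re ψ(ξ)} ≤ (1 + |ξ|)^{-(d+1)}` for large `ξ`, so the
characteristic function `e^{-tψ}` of the density `p_t` is integrable. Fourier inversion then gives
`p_t ≤ (2π)^{-d} ∫ |e^{-tψ}| = C_t` almost everywhere. Finally `P_t f(x)` is the mean of
`f(x + ·)` under the probability density `p_t`, so by Jensen
`|P_t f(x)|^p ≤ ∫ |f(x + z)|^p p_t(z) dz ≤ C_t ‖f‖_p^p`.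
-/

theorem eventually_exp_neg_mul_le_one_add_norm_rpow {E : Type*} [NormedAddCommGroup E]
    [ProperSpace E] {g : E → ℝ}
    (hg : Tendsto (fun ξ => g ξ / Real.log (1 + ‖ξ‖)) (cocompact E) atTop) {t : ℝ} (ht : 0 < t)
    (s : ℝ) : ∀ᶠ ξ in cocompact E, Real.exp (-t * g ξ) ≤ (1 + ‖ξ‖) ^ (-s) := by
  filter_upwards [hg.eventually_ge_atTop (s / t),
    tendsto_norm_cocompact_atTop.eventually_gt_atTop 0] with ξ hξ hξ0
  have hlog : 0 < Real.log (1 + ‖ξ‖) := Real.log_pos (by linarith)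
  rw [div_le_div_iff₀ ht hlog] at hξ
  rw [Real.rpow_def_of_pos (by linarith), Real.exp_le_exp]
  nlinarith

section FiniteDimensional

variable {V : Type*} [NormedAddCommGroup V] [InnerProductSpace ℝ V] [FiniteDimensional ℝ V]
  [MeasurableSpace V] [BorelSpace V]

theorem Continuous.integrable_of_eventually_le_one_add_norm_rpow {F : Type*}
    [NormedAddCommGroup F] {f : V → F} (hf : Continuous f) {s : ℝ} (hs : finrank ℝ V < s)
    (h : ∀ᶠ ξ in cocompact V, ‖f ξ‖ ≤ (1 + ‖ξ‖) ^ (-s)) : Integrable f := by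
  refine hf.locallyIntegrable.integrable_of_isBigO_cocompact (g := fun ξ => (1 + ‖ξ‖) ^ (-s))
    (Asymptotics.IsBigO.of_bound 1 ?_) ((integrable_one_add_norm hs).integrableAtFilter _)
  filter_upwards [h] with ξ hξ
  rwa [one_mul, Real.norm_of_nonneg (by positivity)]

theorem integrable_exp_neg_mul_of_tendsto_div_log {g : V → ℝ}
    (hg : Tendsto (fun ξ => g ξ / Real.log (1 + ‖ξ‖)) (cocompact V) atTop) {t : ℝ} (ht : 0 < t)
    (hcont : Continuous fun ξ => Real.exp (-t * g ξ)) :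
    Integrable fun ξ => Real.exp (-t * g ξ) := by
  refine hcont.integrable_of_eventually_le_one_add_norm_rpow (lt_add_one _) ?_
  filter_upwards [eventually_exp_neg_mul_le_one_add_norm_rpow hg ht (finrank ℝ V + 1)] with ξ hξ
  rwa [Real.norm_of_nonneg (Real.exp_pos _).le]

theorem Real.fourier_eq_integral_cexp_I_inner (f : V → ℂ) (ξ : V) :
    𝓕 f ξ = ∫ x, Complex.exp (Complex.I * ⟪(-(2 * Real.pi)) • ξ, x⟫) * f x := by
  rw [Real.fourier_eq']
  congr 1 with x
  rw [smul_eq_mul, real_inner_smul_left, real_inner_comm]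
  push_cast
  ring_nf

theorem integrable_fourier_of_contDiff_of_hasCompactSupport {Φ : V → ℂ} (hΦ : ContDiff ℝ ∞ Φ)
    (hc : HasCompactSupport Φ) : Integrable (𝓕 Φ) :=
  (𝓕 (hc.toSchwartzMap hΦ)).integrable

theorem MeasureTheory.Integrable.ae_eq_fourierInv_fourier {q : V → ℂ} (hq : Integrable q)
    (hFq : Integrable (𝓕 q)) : q =ᵐ[volume] 𝓕⁻ (𝓕 q) := by
  have hcont : Continuous (𝓕⁻ (𝓕 q)) :=
    VectorFourier.fourierIntegral_continuous Real.continuous_fourierChar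
      continuous_inner.neg hFq
  refine ae_eq_of_integral_contDiff_smul_eq hq.locallyIntegrable hcont.locallyIntegrable
    fun φ hφ hφc => ?_
  set Φ : V → ℂ := fun x => (φ x : ℂ)
  have hΦ : ContDiff ℝ ∞ Φ := Complex.ofRealCLM.contDiff.comp hφ
  have hΦc : HasCompactSupport Φ := hφc.comp_left Complex.ofReal_zero
  have hΦint : Integrable Φ := hΦ.continuous.integrable_of_hasCompactSupport hΦc
  have hFΦ : Integrable (𝓕⁻ Φ) := by
    rw [Real.fourierInv_eq_fourier_comp_neg]
    exact integrable_fourier_of_contDiff_of_hasCompactSupport (hΦ.comp contDiff_neg)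
      (hΦc.comp_homeomorph (Homeomorph.neg V))
  -- Write `φ = 𝓕 (𝓕⁻ φ)` and move the Fourier transform across the pairing, twice.
  calc ∫ x, φ x • q x = ∫ x, q x • 𝓕 (𝓕⁻ Φ) x := by
        rw [hΦ.continuous.fourier_fourierInv_eq hΦint
          (integrable_fourier_of_contDiff_of_hasCompactSupport hΦ hΦc)]
        simp only [Φ, Complex.real_smul, smul_eq_mul, mul_comm]
    _ = ∫ ξ, 𝓕⁻ Φ ξ • 𝓕 q ξ := by
        simpa [mul_comm] using! (VectorFourier.integral_fourierIntegral_smul_eq_flip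
          (L := innerₗ V) Real.continuous_fourierChar continuous_inner hq hFΦ).symm
    _ = ∫ x, φ x • 𝓕⁻ (𝓕 q) x := by
        have hflip : (-innerₗ V).flip = -innerₗ V := by ext; simp [real_inner_comm]
        simpa [hflip, Φ] using! VectorFourier.integral_fourierIntegral_smul_eq_flip
          (L := -innerₗ V) Real.continuous_fourierChar continuous_inner.neg hΦint hFq

noncomputable def charFunDensity (f : V → ℂ) (ξ : V) : ℂ :=
  ∫ x, Complex.exp (Complex.I * ⟪ξ, x⟫) * f x

theorem charFunDensity_eq_fourier (f : V → ℂ) (ξ : V) :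
    charFunDensity f ξ = 𝓕 f ((-(2 * Real.pi))⁻¹ • ξ) := by
  rw [Real.fourier_eq_integral_cexp_I_inner, smul_smul,
    mul_inv_cancel₀ (neg_ne_zero.2 Real.two_pi_pos.ne'), one_smul, charFunDensity]

theorem MeasureTheory.Integrable.continuous_charFunDensity {f : V → ℂ} (hf : Integrable f) :
    Continuous (charFunDensity f) := by
  simp_rw [funext (charFunDensity_eq_fourier f)]
  exact (VectorFourier.fourierIntegral_continuous Real.continuous_fourierChar continuous_inner
    hf).comp (continuous_const_smul _)

theorem MeasureTheory.Integrable.ae_le_integral_norm_charFunDensity {q : V → ℝ}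
    (hq : Integrable q) (hχ : Integrable (charFunDensity fun x => (q x : ℂ))) :
    ∀ᵐ x, q x ≤ (2 * Real.pi) ^ (-(finrank ℝ V : ℝ))
      * ∫ ξ, ‖charFunDensity (fun x => (q x : ℂ)) ξ‖ := by
  set χ := charFunDensity fun x => (q x : ℂ)
  have hF : ∀ ξ, 𝓕 (fun x => (q x : ℂ)) ξ = χ ((-(2 * Real.pi)) • ξ) :=
    Real.fourier_eq_integral_cexp_I_inner _
  have hFint : Integrable (𝓕 fun x => (q x : ℂ)) := by
    rw [funext hF]
    exact hχ.comp_smul (neg_ne_zero.2 Real.two_pi_pos.ne')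
  have hFnorm : ∫ ξ, ‖𝓕 (fun x => (q x : ℂ)) ξ‖
      = (2 * Real.pi) ^ (-(finrank ℝ V : ℝ)) * ∫ ξ, ‖χ ξ‖ := by
    simp_rw [hF]
    rw [Measure.integral_comp_smul volume (fun ξ => ‖χ ξ‖), smul_eq_mul, abs_inv, abs_pow,
      abs_neg, abs_of_pos Real.two_pi_pos, Real.rpow_neg Real.two_pi_pos.le, Real.rpow_natCast]
  filter_upwards [hq.ofReal.ae_eq_fourierInv_fourier hFint] with x hx
  calc q x = (𝓕⁻ (𝓕 fun x => (q x : ℂ)) x).re := by simpa using congrArg Complex.re hx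
    _ ≤ ‖𝓕⁻ (𝓕 fun x => (q x : ℂ)) x‖ := Complex.re_le_norm _
    _ ≤ ∫ ξ, ‖𝓕 (fun x => (q x : ℂ)) ξ‖ :=
        VectorFourier.norm_fourierIntegral_le_integral_norm _ _ _ _ _
    _ = _ := hFnorm

end FiniteDimensional

theorem enorm_integral_mul_le_of_ae_le {α : Type*} [MeasurableSpace α] {μ : Measure α}
    {k g : α → ℝ} {M : ℝ≥0∞} {p : ℝ} (hk : Integrable k μ) (hk0 : 0 ≤ᵐ[μ] k)
    (hk1 : ∫ z, k z ∂μ = 1) (hkM : ∀ᵐ z ∂μ, ENNReal.ofReal (k z) ≤ M) (hp : 1 ≤ p)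
    (hg : AEStronglyMeasurable g μ) :
    ‖∫ z, g z * k z ∂μ‖ₑ ≤ M ^ (1 / p) * eLpNorm g (ENNReal.ofReal p) μ := by
  set ν := μ.withDensity fun z => ENNReal.ofReal (k z)
  have : IsProbabilityMeasure ν := by
    constructor
    rw [withDensity_apply _ MeasurableSet.univ, Measure.restrict_univ,
      ← ofReal_integral_eq_lintegral_ofReal hk hk0, hk1, ENNReal.ofReal_one]
  calc ‖∫ z, g z * k z ∂μ‖ₑ ≤ ∫⁻ z, ‖g z‖ₑ * ENNReal.ofReal (k z) ∂μ := by
        refine (enorm_integral_le_lintegral_enorm _).trans (lintegral_mono_ae ?_)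
        filter_upwards [hk0] with z hz
        rw [enorm_mul, Real.enorm_of_nonneg hz]
    _ = eLpNorm g 1 ν := by
        rw [eLpNorm_one_eq_lintegral_enorm, lintegral_withDensity_eq_lintegral_mul₀
          hk.1.aemeasurable.ennreal_ofReal hg.enorm]
        simp only [Pi.mul_apply, mul_comm]
    _ ≤ eLpNorm g (ENNReal.ofReal p) ν :=
        eLpNorm_le_eLpNorm_of_exponent_le (by simpa using hp)
          (hg.mono_ac (withDensity_absolutelyContinuous _ _))
    _ ≤ eLpNorm g (ENNReal.ofReal p) (M • μ) := by
        refine eLpNorm_mono_measure _ ?_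
        rw [← withDensity_const]
        exact withDensity_mono hkM
    _ = M ^ (1 / p) * eLpNorm g (ENNReal.ofReal p) μ := by
        rw [eLpNorm_smul_measure_of_ne_top ENNReal.ofReal_ne_top, one_div, ENNReal.toReal_inv,
          ENNReal.toReal_ofReal (by linarith), smul_eq_mul, one_div]

theorem eLpNorm_top_integral_add_mul_le {G : Type*} [MeasurableSpace G] [AddGroup G]
    [MeasurableAdd G] {μ : Measure G} [μ.IsAddLeftInvariant] {k f : G → ℝ} {M : ℝ≥0∞} {p : ℝ}
    (hk : Integrable k μ) (hk0 : 0 ≤ᵐ[μ] k) (hk1 : ∫ z, k z ∂μ = 1)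
    (hkM : ∀ᵐ z ∂μ, ENNReal.ofReal (k z) ≤ M) (hp : 1 ≤ p) (hf : AEStronglyMeasurable f μ) :
    eLpNorm (fun x => ∫ z, f (x + z) * k z ∂μ) ⊤ μ
      ≤ M ^ (1 / p) * eLpNorm f (ENNReal.ofReal p) μ := by
  rw [eLpNorm_exponent_top]
  refine eLpNormEssSup_le_of_ae_enorm_bound (Eventually.of_forall fun x => ?_)
  have hx := measurePreserving_add_left μ x
  rw [← eLpNorm_comp_measurePreserving hf hx]
  exact enorm_integral_mul_le_of_ae_le hk hk0 hk1 hkM hp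
    (hf.comp_quasiMeasurePreserving hx.quasiMeasurePreserving)

theorem ultracontractivity_general (d : ℕ)
    (ψ : EuclideanSpace ℝ (Fin d) → ℂ)
    (hHW : Tendsto (fun ξ => (ψ ξ).re / Real.log (1 + ‖ξ‖)) (cocompact _) atTop)
    (pker : ℝ → EuclideanSpace ℝ (Fin d) → ℝ)
    (hker_int : ∀ t > (0 : ℝ), Integrable (pker t))
    (hker_nonneg : ∀ t > (0 : ℝ), ∀ x, 0 ≤ pker t x)
    (hker_mass : ∀ t > (0 : ℝ), ∫ x, pker t x = 1)
    (hker_ft : ∀ t > (0 : ℝ), ∀ ξ,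
      ∫ x, Complex.exp (Complex.I * (⟪ξ, x⟫ : ℂ)) * (pker t x : ℂ)
        = Complex.exp (-(t : ℂ) * ψ ξ))
    (P : ℝ → (EuclideanSpace ℝ (Fin d) → ℝ) → EuclideanSpace ℝ (Fin d) → ℝ)
    (hP : ∀ t f x, P t f x = ∫ z, f (x + z) * pker t z)
    (t : ℝ) (ht : 0 < t) :
    Integrable (fun ξ : EuclideanSpace ℝ (Fin d) => Real.exp (-t * (ψ ξ).re)) ∧
      ∀ p : ℝ, 1 ≤ p →
        ∀ f : EuclideanSpace ℝ (Fin d) → ℝ, MemLp f (ENNReal.ofReal p) →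
          eLpNorm (P t f) ⊤ volume
            ≤ ENNReal.ofReal
                (((2 * Real.pi) ^ (-(d : ℝ))
                    * ∫ ξ, Real.exp (-t * (ψ ξ).re)) ^ (1 / p))
              * eLpNorm f (ENNReal.ofReal p) volume := by
  set χ := charFunDensity fun x => (pker t x : ℂ)
  have hχ_norm : (fun ξ => ‖χ ξ‖) = fun ξ => Real.exp (-t * (ψ ξ).re) := by
    ext ξ
    simp [χ, charFunDensity, hker_ft t ht ξ, Complex.norm_exp]
  have hE : Integrable fun ξ => Real.exp (-t * (ψ ξ).re) :=
    integrable_exp_neg_mul_of_tendsto_div_log hHW ht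
      (hχ_norm ▸ (hker_int t ht).ofReal.continuous_charFunDensity.norm)
  have hχ : Integrable χ :=
    (integrable_norm_iff (hker_int t ht).ofReal.continuous_charFunDensity.aestronglyMeasurable).1
      (hχ_norm ▸ hE)
  have hker_le := (hker_int t ht).ae_le_integral_norm_charFunDensity hχ
  rw [hχ_norm, finrank_euclideanSpace_fin] at hker_le
  refine ⟨hE, fun p hp f hf => ?_⟩
  rw [show P t f = _ from funext (hP t f),
    ← ENNReal.ofReal_rpow_of_nonneg (by positivity) (by positivity)]
  exact eLpNorm_top_integral_add_mul_le (hker_int t ht) (Eventually.of_forall (hker_nonneg t ht))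
    (hker_mass t ht) (hker_le.mono fun x hx => ENNReal.ofReal_le_ofReal hx) hp hf.1

/-- **Ultracontractivity.** Let `ν` be a Lévy measure on `ℝ^d` whose
characteristic exponent `ψ` satisfies the Hartman–Wintner condition, and let `(P_t)`
be the associated convolution semigroup.  For every `t > 0` the constant
`C_t = (2π)^{−d} ∫ e^{−t Re ψ(ξ)} dξ` is finite (i.e. the integrand is integrable),
and for every `1 ≤ p < ∞` and `f ∈ L^p(ℝ^d)`, `‖P_t f‖_∞ ≤ C_t^{1/p} ‖f‖_p`. -/
theorem ultracontractivity (d : ℕ)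
    (ν : Measure (EuclideanSpace ℝ (Fin d)))
    (hν0 : ν {0} = 0)
    (hνint : ∫⁻ y, ENNReal.ofReal (min 1 (‖y‖ ^ 2)) ∂ν < ⊤)
    (ψ : EuclideanSpace ℝ (Fin d) → ℂ)
    (hψ : ∀ ξ, ψ ξ = ∫ y, (1 - Complex.exp (Complex.I * (⟪ξ, y⟫ : ℂ))
      + Complex.I * (⟪ξ, y⟫ : ℂ) * (if ‖y‖ < 1 then 1 else 0)) ∂ν)
    (hHW : Tendsto (fun ξ => (ψ ξ).re / Real.log (1 + ‖ξ‖)) (cocompact _) atTop)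
    (pker : ℝ → EuclideanSpace ℝ (Fin d) → ℝ)
    (hker_int : ∀ t > (0 : ℝ), Integrable (pker t))
    (hker_nonneg : ∀ t > (0 : ℝ), ∀ x, 0 ≤ pker t x)
    (hker_mass : ∀ t > (0 : ℝ), ∫ x, pker t x = 1)
    (hker_ft : ∀ t > (0 : ℝ), ∀ ξ,
      ∫ x, Complex.exp (Complex.I * (⟪ξ, x⟫ : ℂ)) * (pker t x : ℂ)
        = Complex.exp (-(t : ℂ) * ψ ξ))
    (P : ℝ → (EuclideanSpace ℝ (Fin d) → ℝ) → EuclideanSpace ℝ (Fin d) → ℝ)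
    (hP : ∀ t f x, P t f x = ∫ z, f (x + z) * pker t z)
    (t : ℝ) (ht : 0 < t) :
    Integrable (fun ξ : EuclideanSpace ℝ (Fin d) => Real.exp (-t * (ψ ξ).re)) ∧
      ∀ p : ℝ, 1 ≤ p →
        ∀ f : EuclideanSpace ℝ (Fin d) → ℝ, MemLp f (ENNReal.ofReal p) →
          eLpNorm (P t f) ⊤ volume
            ≤ ENNReal.ofReal
                (((2 * Real.pi) ^ (-(d : ℝ))
                    * ∫ ξ, Real.exp (-t * (ψ ξ).re)) ^ (1 / p))
              * eLpNorm f (ENNReal.ofReal p) volume :=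
  ultracontractivity_general d ψ hHW pker hker_int hker_nonneg hker_mass hker_ft P hP t ht
end
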